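/- arXiv:2409.11039 — 4 statements merged into one kernel-verified Lean document; each statement's English description precedes it below -/
import Mathlib

section
/- Let N ≥ 2 be an integer, R > 0, and m > (N−2)/2. Then there exists a constant C = C(N,m,R) such that for every u ∈ 𝒜, sup_{r ∈ (0,R]} r^m |u(r)| ≤ C (∫₀^R r^{N-1}|u'(r)|² dr)^{1/2}. -/
/-! For `0 < r ≤ R` we have `u(r) = -∫_r^R u'`, so Cauchy–Schwarz against the weight `t^{N-1}`
gives `|u(r)|² ≤ (∫_r^R t^{1-N} dt) ‖u‖²`. As `r^{2m} ≤ t^{2m}` for `t ≥ r`, the factor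
`r^{2m} ∫_r^R t^{1-N} dt` is at most `∫_0^R t^{2m+1-N} dt = R^{2m+2-N} / (2m+2-N)`, which is finite
precisely because `m > (N-2)/2`. -/

open MeasureTheory Set Filter
open scoped Classical

noncomputable section

/-- The space 𝒜 of functions `u ∈ W^{1,1}_loc((0,R])` (modelled here by functions that are
differentiable on `(0,R]` with derivative `d`) such that `∫₀^R r^{N-1} |u'|² dr < ∞`
and `u(R) = 0`. -/
structure SpaceA (N : ℕ) (R : ℝ) where
  u : ℝ → ℝ
  d : ℝ → ℝ
  hasDeriv : ∀ r ∈ Set.Ioc (0 : ℝ) R, HasDerivAt u (d r) r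
  sq_integrable : MeasureTheory.IntegrableOn (fun r : ℝ => r ^ (N - 1) * d r ^ 2) (Set.Ioo 0 R)
  boundary : u R = 0

namespace SpaceA

variable {N : ℕ} {R : ℝ}

/-- Membership in `K = {u ∈ 𝒜 : ‖u'‖_∞ ≤ 1}`. -/
def inK (w : SpaceA N R) : Prop := ∀ r ∈ Set.Ioo (0 : ℝ) R, |w.d r| ≤ 1

/-- `‖u‖² = ∫₀^R r^{N-1}|u'|² dr`. -/
def normSq (w : SpaceA N R) : ℝ := ∫ r in Set.Ioo (0 : ℝ) R, r ^ (N - 1) * w.d r ^ 2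

/-- The distance in `𝒜`. -/
def distA (w v : SpaceA N R) : ℝ :=
  Real.sqrt (∫ r in Set.Ioo (0 : ℝ) R, r ^ (N - 1) * (w.d r - v.d r) ^ 2)

/-- The (real-valued) functional `Ψ(u) = ∫₀^R r^{N-1}(1 - √(1-|u'|²)) dr` (used on `K`). -/
def PsiR (w : SpaceA N R) : ℝ :=
  ∫ r in Set.Ioo (0 : ℝ) R, r ^ (N - 1) * (1 - Real.sqrt (1 - w.d r ^ 2))

/-- The extended-real-valued functional `Ψ`, equal to `+∞` off `K`. -/
def PsiE (w : SpaceA N R) : EReal := if w.inK then ((w.PsiR : ℝ) : EReal) else ⊤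

def isPos (w : SpaceA N R) : Prop := ∀ r ∈ Set.Ioo (0 : ℝ) R, 0 < w.u r

def isNeg (w : SpaceA N R) : Prop := ∀ r ∈ Set.Ioo (0 : ℝ) R, w.u r < 0

end SpaceA

variable {N : ℕ} {R : ℝ}

/-- `F(r,s) = ∫₀ˢ f(r,t) dt`. -/
def Fint (f : ℝ → ℝ → ℝ) (r s : ℝ) : ℝ := ∫ t in (0 : ℝ)..s, f r t

/-- (F1) continuity of `f`. -/
def hypF1 (R : ℝ) (f : ℝ → ℝ → ℝ) : Prop :=
  ContinuousOn (fun p : ℝ × ℝ => f p.1 p.2) (Set.Icc 0 R ×ˢ Set.Icc (-R) R)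

/-- (F2) `f(r,s)/s → 0` as `s → 0`, uniformly in `r`. -/
def hypF2 (R : ℝ) (f : ℝ → ℝ → ℝ) : Prop :=
  ∀ ε > (0 : ℝ), ∃ δ > (0 : ℝ), ∀ r ∈ Set.Icc (0 : ℝ) R, ∀ s : ℝ, s ≠ 0 → |s| < δ →
    |f r s / s| < ε

/-- (F3) sign condition. -/
def hypF3 (R : ℝ) (f : ℝ → ℝ → ℝ) : Prop :=
  ∀ r ∈ Set.Icc (0 : ℝ) R, ∀ s : ℝ, s ≠ 0 → |s| ≤ R → 0 < s * f r s

/-- (F4) superlinearity with the quantitative bound. -/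
def hypF4 (N : ℕ) (R : ℝ) (f : ℝ → ℝ → ℝ) : Prop :=
  ∃ θ : ℝ, 2 < θ ∧ ∃ a₁ : ℝ, 0 < a₁ ∧ ∃ a₂ : ℝ, 0 ≤ a₂ ∧
    (∀ r ∈ Set.Icc (0 : ℝ) R, ∀ s ∈ Set.Icc (-R) R, a₁ * |s| ^ θ - a₂ ≤ Fint f r s) ∧
    (1 + a₂) / (N : ℝ) -
        a₁ * R ^ θ *
          (Real.Gamma (N : ℝ) * Real.Gamma (θ + 1) / Real.Gamma ((N : ℝ) + θ + 1)) ≤ -1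

/-- (F5) quasi-evenness of `F` near `0`. -/
def hypF5 (R : ℝ) (f : ℝ → ℝ → ℝ) : Prop :=
  ∃ σ : ℝ, 0 < σ ∧ ∃ θb : ℝ, 4 < θb ∧
    ∀ r ∈ Set.Icc (0 : ℝ) R, ∀ s ∈ Set.Icc (-σ) σ,
      |Fint f r (-s) - Fint f r s| ≤ |s| ^ θb

/-- (F6) `f ∈ C¹` together with a growth bound on `∂ₛf` near `s = 0`. -/
def hypF6 (R : ℝ) (f : ℝ → ℝ → ℝ) : Prop :=
  ContDiffOn ℝ 1 (fun p : ℝ × ℝ => f p.1 p.2) (Set.Icc 0 R ×ˢ Set.Icc (-R) R) ∧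
  ∃ σ : ℝ, 0 < σ ∧ ∃ θt : ℝ, 2 < θt ∧ ∃ c : ℝ, 0 < c ∧
    ∀ r ∈ Set.Icc (0 : ℝ) R, ∀ s ∈ Set.Icc (-σ) σ,
      |deriv (fun t => f r t) s| ≤ c * |s| ^ (θt - 2)

/-- (B) the weight `b` is continuous and pinched between positive constants. -/
def hypB (R : ℝ) (b : ℝ → ℝ) : Prop :=
  ContinuousOn b (Set.Icc 0 R) ∧
    ∃ b₀ b₁ : ℝ, 0 < b₀ ∧ ∀ r ∈ Set.Icc (0 : ℝ) R, b₀ ≤ b r ∧ b r ≤ b₁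

/-- A weak solution of problem (BP). -/
def isWeakSol (q lam : ℝ) (b : ℝ → ℝ) (f : ℝ → ℝ → ℝ) (w : SpaceA N R) : Prop :=
  w.inK ∧ ∀ φ : SpaceA N R, φ.inK →
    (∫ r in Set.Ioo (0 : ℝ) R, r ^ (N - 1) * w.d r * φ.d r / Real.sqrt (1 - w.d r ^ 2)) =
      ∫ r in Set.Ioo (0 : ℝ) R,
        r ^ (N - 1) * (lam * b r * |w.u r| ^ (q - 2) * w.u r + f r (w.u r)) * φ.u r

/-- The truncation `f⁺`. -/
def fplus (R : ℝ) (f : ℝ → ℝ → ℝ) (r s : ℝ) : ℝ :=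
  if s < 0 then 0
  else if s ≤ R then f r s
  else if s < R + 1 then -(f r R) * (s - R - 1)
  else 0

/-- The truncation `f⁻`. -/
def fminus (R : ℝ) (f : ℝ → ℝ → ℝ) (r s : ℝ) : ℝ :=
  if 0 < s then 0
  else if -R ≤ s then f r s
  else if -R - 1 < s then f r (-R) * (s + R + 1)
  else 0

/-- The extension `f̂` (equal to `f` for `|s| ≤ R`, linear for `R < |s| < R+1`, `0` beyond). -/
def fhat (R : ℝ) (f : ℝ → ℝ → ℝ) (r s : ℝ) : ℝ :=
  if |s| ≤ R then f r s
  else if R < s ∧ s < R + 1 then f r R * (R + 1 - s)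
  else if -(R + 1) < s ∧ s < -R then f r (-R) * (s + R + 1)
  else 0

/-- A weak solution of the modified problem (BP⁺). -/
def isWeakSolPlus (q lam : ℝ) (b : ℝ → ℝ) (f : ℝ → ℝ → ℝ) (w : SpaceA N R) : Prop :=
  w.inK ∧ ∀ φ : SpaceA N R, φ.inK →
    (∫ r in Set.Ioo (0 : ℝ) R, r ^ (N - 1) * w.d r * φ.d r / Real.sqrt (1 - w.d r ^ 2)) =
      ∫ r in Set.Ioo (0 : ℝ) R,
        r ^ (N - 1) *
          (lam * b r * |w.u r| ^ (q - 2) * max (w.u r) 0 + fplus R f r (w.u r)) * φ.u r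

/-- A weak solution of the modified problem (BP⁻). -/
def isWeakSolMinus (q lam : ℝ) (b : ℝ → ℝ) (f : ℝ → ℝ → ℝ) (w : SpaceA N R) : Prop :=
  w.inK ∧ ∀ φ : SpaceA N R, φ.inK →
    (∫ r in Set.Ioo (0 : ℝ) R, r ^ (N - 1) * w.d r * φ.d r / Real.sqrt (1 - w.d r ^ 2)) =
      ∫ r in Set.Ioo (0 : ℝ) R,
        r ^ (N - 1) *
          (-(lam * b r * |w.u r| ^ (q - 2) * max (-w.u r) 0) + fminus R f r (w.u r)) * φ.u r

/-- The pairing `⟨(F_λ⁺)'(u), z⟩`. -/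
def FDplus (q lam : ℝ) (b : ℝ → ℝ) (f : ℝ → ℝ → ℝ) (w : SpaceA N R) (z : ℝ → ℝ) : ℝ :=
  -lam * (∫ r in Set.Ioo (0 : ℝ) R,
      r ^ (N - 1) * b r * |max (w.u r) 0| ^ (q - 2) * max (w.u r) 0 * z r)
    - ∫ r in Set.Ioo (0 : ℝ) R, r ^ (N - 1) * fplus R f r (w.u r) * z r

/-- The pairing `⟨(F_λ⁻)'(u), z⟩`. -/
def FDminus (q lam : ℝ) (b : ℝ → ℝ) (f : ℝ → ℝ → ℝ) (w : SpaceA N R) (z : ℝ → ℝ) : ℝ :=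
  -lam * (∫ r in Set.Ioo (0 : ℝ) R,
      r ^ (N - 1) * b r * |max (-w.u r) 0| ^ (q - 2) * max (-w.u r) 0 * z r)
    - ∫ r in Set.Ioo (0 : ℝ) R, r ^ (N - 1) * fminus R f r (w.u r) * z r

/-- Critical point of `I_λ⁺ = Ψ + F_λ⁺` in the sense of Szulkin. -/
def isCritPlus (q lam : ℝ) (b : ℝ → ℝ) (f : ℝ → ℝ → ℝ) (w : SpaceA N R) : Prop :=
  w.inK ∧ ∀ v : SpaceA N R, v.inK →
    0 ≤ FDplus q lam b f w (fun r => v.u r - w.u r) + v.PsiR - w.PsiR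

/-- Critical point of `I_λ⁻ = Ψ + F_λ⁻` in the sense of Szulkin. -/
def isCritMinus (q lam : ℝ) (b : ℝ → ℝ) (f : ℝ → ℝ → ℝ) (w : SpaceA N R) : Prop :=
  w.inK ∧ ∀ v : SpaceA N R, v.inK →
    0 ≤ FDminus q lam b f w (fun r => v.u r - w.u r) + v.PsiR - w.PsiR

/-- The functional `I_λ⁺` (its real-valued expression, valid on `K`). -/
def IlamPlus (q lam : ℝ) (b : ℝ → ℝ) (f : ℝ → ℝ → ℝ) (w : SpaceA N R) : ℝ :=
  w.PsiR - (lam / q) * (∫ r in Set.Ioo (0 : ℝ) R, r ^ (N - 1) * b r * |max (w.u r) 0| ^ q)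
    - ∫ r in Set.Ioo (0 : ℝ) R, r ^ (N - 1) * Fint (fplus R f) r (w.u r)

/-- The functional `I_λ⁻` (its real-valued expression, valid on `K`). -/
def IlamMinus (q lam : ℝ) (b : ℝ → ℝ) (f : ℝ → ℝ → ℝ) (w : SpaceA N R) : ℝ :=
  w.PsiR - (lam / q) * (∫ r in Set.Ioo (0 : ℝ) R, r ^ (N - 1) * b r * |max (-w.u r) 0| ^ q)
    - ∫ r in Set.Ioo (0 : ℝ) R, r ^ (N - 1) * Fint (fminus R f) r (w.u r)

/-- The full functional `I_λ` (its real-valued expression, valid on `K`), with `F` the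
primitive of the extension `f̂`. -/
def IlamFull (q lam : ℝ) (b : ℝ → ℝ) (f : ℝ → ℝ → ℝ) (w : SpaceA N R) : ℝ :=
  w.PsiR - (lam / q) * (∫ r in Set.Ioo (0 : ℝ) R, r ^ (N - 1) * b r * |w.u r| ^ q)
    - ∫ r in Set.Ioo (0 : ℝ) R, r ^ (N - 1) * Fint (fhat R f) r (w.u r)

/-- The functional `I_λ` with `F` the primitive of `f` itself. -/
def Ilam (q lam : ℝ) (b : ℝ → ℝ) (f : ℝ → ℝ → ℝ) (w : SpaceA N R) : ℝ :=
  w.PsiR - (lam / q) * (∫ r in Set.Ioo (0 : ℝ) R, r ^ (N - 1) * b r * |w.u r| ^ q)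
    - ∫ r in Set.Ioo (0 : ℝ) R, r ^ (N - 1) * Fint f r (w.u r)

theorem integral_mul_le_sqrt_integral_sq_mul_sqrt_integral_sq {α : Type*} [MeasurableSpace α]
    {μ : Measure α} {f g : α → ℝ} (hf : 0 ≤ᵐ[μ] f) (hg : 0 ≤ᵐ[μ] g) (hf₂ : MemLp f 2 μ)
    (hg₂ : MemLp g 2 μ) :
    ∫ x, f x * g x ∂μ ≤ √(∫ x, f x ^ 2 ∂μ) * √(∫ x, g x ^ 2 ∂μ) := by
  have := integral_mul_le_Lp_mul_Lq_of_nonneg Real.HolderConjugate.two_two hf hg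
    (by simpa using hf₂) (by simpa using hg₂)
  simpa only [Real.rpow_two, Real.sqrt_eq_rpow] using this

theorem abs_le_inv_add_mul_sq {p : ℝ} (hp : 0 < p) (x : ℝ) : |x| ≤ p⁻¹ + p * x ^ 2 := by
  have h := sq_nonneg (p * |x| - 1)
  rw [← sq_abs x]
  field_simp
  nlinarith [abs_nonneg x]

theorem integrableOn_of_integrableOn_inv_of_integrableOn_mul_sq {α : Type*}
    [MeasurableSpace α] {μ : Measure α} {ρ d : α → ℝ} {s : Set α} (hs : MeasurableSet s)
    (hρ : ∀ t ∈ s, 0 < ρ t) (hd_meas : AEStronglyMeasurable d (μ.restrict s))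
    (hρ_inv : IntegrableOn (fun t => (ρ t)⁻¹) s μ)
    (hd : IntegrableOn (fun t => ρ t * d t ^ 2) s μ) : IntegrableOn d s μ := by
  refine (hρ_inv.add hd).mono' hd_meas ?_
  filter_upwards [ae_restrict_mem hs] with t ht
  exact abs_le_inv_add_mul_sq (hρ t ht) (d t)

theorem abs_sub_le_sqrt_integral_inv_mul_sqrt_integral_mul_sq {u d ρ : ℝ → ℝ} {a b : ℝ}
    (hab : a ≤ b) (hu : ∀ t ∈ Icc a b, HasDerivAt u (d t) t) (hρ : ContinuousOn ρ (Icc a b))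
    (hρ_pos : ∀ t ∈ Icc a b, 0 < ρ t) (hd : IntegrableOn (fun t => ρ t * d t ^ 2) (Ioo a b)) :
    |u b - u a| ≤ √(∫ t in Ioo a b, (ρ t)⁻¹) * √(∫ t in Ioo a b, ρ t * d t ^ 2) := by
  have hρ_Ioo : ∀ t ∈ Ioo a b, 0 < ρ t := fun t ht => hρ_pos t (Ioo_subset_Icc_self ht)
  have hd_meas : AEStronglyMeasurable d (volume.restrict (Ioo a b)) :=
    (measurable_deriv u).aestronglyMeasurable.congr <| (ae_restrict_mem measurableSet_Ioo).mono
      fun t ht => (hu t (Ioo_subset_Icc_self ht)).deriv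
  have hρ_meas : AEStronglyMeasurable ρ (volume.restrict (Ioo a b)) :=
    (hρ.mono Ioo_subset_Icc_self).aestronglyMeasurable measurableSet_Ioo
  have hρ_inv : IntegrableOn (fun t => (ρ t)⁻¹) (Ioo a b) :=
    ((hρ.inv₀ fun t ht => (hρ_pos t ht).ne').integrableOn_Icc).mono_set Ioo_subset_Icc_self
  have hd_int : IntegrableOn d (Ioo a b) :=
    integrableOn_of_integrableOn_inv_of_integrableOn_mul_sq measurableSet_Ioo hρ_Ioo hd_meas
      hρ_inv hd
  have hftc : u b - u a = ∫ t in Ioo a b, d t := by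
    rw [← integral_Ioc_eq_integral_Ioo, ← intervalIntegral.integral_of_le hab]
    refine (intervalIntegral.integral_eq_sub_of_hasDerivAt (fun t ht => hu t ?_) ?_).symm
    · rwa [uIcc_of_le hab] at ht
    · exact (intervalIntegrable_iff_integrableOn_Ioo_of_le hab).2 hd_int
  have hsplit : ∀ t ∈ Ioo a b, |d t| = (√(ρ t))⁻¹ * (√(ρ t) * |d t|) := fun t ht => by
    rw [← mul_assoc, inv_mul_cancel₀ (Real.sqrt_pos.2 (hρ_Ioo t ht)).ne', one_mul]
  have hf_sq : ∀ t ∈ Ioo a b, ((√(ρ t))⁻¹) ^ 2 = (ρ t)⁻¹ := fun t ht => by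
    rw [inv_pow, Real.sq_sqrt (hρ_Ioo t ht).le]
  have hg_sq : ∀ t ∈ Ioo a b, (√(ρ t) * |d t|) ^ 2 = ρ t * d t ^ 2 := fun t ht => by
    rw [mul_pow, Real.sq_sqrt (hρ_Ioo t ht).le, sq_abs]
  have hf : MemLp (fun t => (√(ρ t))⁻¹) 2 (volume.restrict (Ioo a b)) :=
    (memLp_two_iff_integrable_sq hρ_meas.aemeasurable.sqrt.inv.aestronglyMeasurable).2 <|
      hρ_inv.congr_fun (fun t ht => (hf_sq t ht).symm) measurableSet_Ioo
  have hg : MemLp (fun t => √(ρ t) * |d t|) 2 (volume.restrict (Ioo a b)) :=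
    (memLp_two_iff_integrable_sq (hρ_meas.aemeasurable.sqrt.mul
        hd_meas.aemeasurable.abs).aestronglyMeasurable).2 <|
      hd.congr_fun (fun t ht => (hg_sq t ht).symm) measurableSet_Ioo
  calc |u b - u a| ≤ ∫ t in Ioo a b, |d t| := hftc ▸ abs_integral_le_integral_abs
    _ = ∫ t in Ioo a b, (√(ρ t))⁻¹ * (√(ρ t) * |d t|) :=
        setIntegral_congr_fun measurableSet_Ioo hsplit
    _ ≤ _ := integral_mul_le_sqrt_integral_sq_mul_sqrt_integral_sq
        (Eventually.of_forall fun t => by positivity)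
        (Eventually.of_forall fun t => by positivity) hf hg
    _ = _ := by
      rw [setIntegral_congr_fun measurableSet_Ioo hf_sq,
        setIntegral_congr_fun measurableSet_Ioo hg_sq]

theorem sq_rpow_mul_integral_inv_pow_le {r R m : ℝ} {n : ℕ} (hr : 0 < r) (hrR : r ≤ R)
    (hm : 0 ≤ m) (hn : (n : ℝ) < 2 * m + 1) :
    (r ^ m) ^ 2 * ∫ t in Ioo r R, (t ^ n)⁻¹ ≤ R ^ (2 * m + 1 - n) / (2 * m + 1 - n) := by
  set a := 2 * m + 1 - n
  have ha : 0 < a := by simp only [a]; linarith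
  have hpow : ∀ t ∈ Ioo r R, (r ^ m) ^ 2 * (t ^ n)⁻¹ ≤ t ^ (a - 1) := fun t ht => by
    have ht₀ : 0 < t := hr.trans ht.1
    rw [show a - 1 = m * (2 : ℕ) - n by simp only [a]; push_cast; ring, Real.rpow_sub ht₀,
      Real.rpow_mul_natCast ht₀.le, Real.rpow_natCast, div_eq_mul_inv]
    gcongr
    exact ht.1.le
  have hint : IntegrableOn (fun t => t ^ (a - 1)) (Ioo r R) :=
    ((intervalIntegral.intervalIntegrable_rpow' (by linarith)).1).mono_set Ioo_subset_Ioc_self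
  calc (r ^ m) ^ 2 * ∫ t in Ioo r R, (t ^ n)⁻¹ = ∫ t in Ioo r R, (r ^ m) ^ 2 * (t ^ n)⁻¹ :=
        (integral_const_mul _ _).symm
    _ ≤ ∫ t in Ioo r R, t ^ (a - 1) := by
        refine integral_mono_of_nonneg ?_ hint ?_ <;>
          filter_upwards [ae_restrict_mem measurableSet_Ioo] with t ht
        · have ht₀ : 0 < t := hr.trans ht.1
          positivity
        · exact hpow t ht
    _ = (R ^ a - r ^ a) / a := by
        rw [← integral_Ioc_eq_integral_Ioo, ← intervalIntegral.integral_of_le hrR,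
          integral_rpow (Or.inl (by linarith)), sub_add_cancel]
    _ ≤ R ^ a / a := by gcongr; exact sub_le_self _ (Real.rpow_nonneg hr.le a)

namespace SpaceA

theorem integral_Ioo_le_normSq (w : SpaceA N R) {r : ℝ} (hr : 0 ≤ r) :
    ∫ t in Ioo r R, t ^ (N - 1) * w.d t ^ 2 ≤ w.normSq :=
  setIntegral_mono_set w.sq_integrable
    ((ae_restrict_mem measurableSet_Ioo).mono fun t ht => by have := ht.1; positivity)
    (Ioo_subset_Ioo_left hr).eventuallyLE

theorem abs_u_le_sqrt_integral_mul_sqrt_normSq (w : SpaceA N R) {r : ℝ} (hr : r ∈ Ioc 0 R) :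
    |w.u r| ≤ √(∫ t in Ioo r R, (t ^ (N - 1))⁻¹) * √w.normSq := by
  have hIcc : Icc r R ⊆ Ioc 0 R := Icc_subset_Ioc_iff hr.2 |>.2 ⟨hr.1, le_rfl⟩
  have h := abs_sub_le_sqrt_integral_inv_mul_sqrt_integral_mul_sq (ρ := fun t => t ^ (N - 1))
    hr.2 (fun t ht => w.hasDeriv t (hIcc ht)) (continuousOn_pow _)
    (fun t ht => pow_pos (hIcc ht).1 _)
    (w.sq_integrable.mono_set (Ioo_subset_Ioo_left hr.1.le))
  rw [w.boundary, zero_sub, abs_neg] at h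
  exact h.trans (by gcongr; exact w.integral_Ioo_le_normSq hr.1.le)

end SpaceA

theorem weighted_sup_estimate_general
    (N : ℕ) (hN : 2 ≤ N) (R : ℝ) (m : ℝ) (hm : ((N : ℝ) - 2) / 2 < m) :
    ∃ C : ℝ, ∀ w : SpaceA N R, ∀ r ∈ Set.Ioc (0 : ℝ) R,
      r ^ m * |w.u r| ≤ C * Real.sqrt w.normSq := by
  have hN' : ((N - 1 : ℕ) : ℝ) = N - 1 := by rw [Nat.cast_sub (by omega), Nat.cast_one]
  have hN₂ : (2 : ℝ) ≤ N := by exact_mod_cast hN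
  have hm₀ : 0 ≤ m := by linarith
  have hn : ((N - 1 : ℕ) : ℝ) < 2 * m + 1 := by linarith
  refine ⟨√(R ^ (2 * m + 1 - (N - 1 : ℕ)) / (2 * m + 1 - (N - 1 : ℕ))), fun w r hr => ?_⟩
  have hr₀ : 0 < r := hr.1
  calc r ^ m * |w.u r| ≤ r ^ m * (√(∫ t in Ioo r R, (t ^ (N - 1))⁻¹) * √w.normSq) := by
        gcongr
        exact w.abs_u_le_sqrt_integral_mul_sqrt_normSq hr
    _ = √((r ^ m) ^ 2 * ∫ t in Ioo r R, (t ^ (N - 1))⁻¹) * √w.normSq := by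
        rw [Real.sqrt_mul (by positivity), Real.sqrt_sq (by positivity), mul_assoc]
    _ ≤ _ := by
        gcongr
        exact sq_rpow_mul_integral_inv_pow_le hr₀ hr.2 hm₀ hn

/-- Weighted `L^∞` estimate: `‖r^m u‖_∞ ≤ C(N,m,R) ‖u‖` for `m > (N-2)/2`. -/
theorem weighted_sup_estimate
    (N : ℕ) (hN : 2 ≤ N) (R : ℝ) (hR : 0 < R) (m : ℝ) (hm : ((N : ℝ) - 2) / 2 < m) :
    ∃ C : ℝ, ∀ w : SpaceA N R, ∀ r ∈ Set.Ioc (0 : ℝ) R,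
      r ^ m * |w.u r| ≤ C * Real.sqrt w.normSq :=
  weighted_sup_estimate_general N hN R m hm
end
end

section
/- (Weighted Sobolev/Poincaré inequality.) Let R > 0 and suppose either N ≥ 3 is an integer and p ∈ [1, 2N/(N−2)), or N = 2 and p ∈ [1, +∞). Then there exists a constant C(N,p,R) such that for every u ∈ 𝒜, ∫₀^R r^{N-1}|u(r)|^p dr ≤ C(N,p,R) (∫₀^R r^{N-1}|u'(r)|² dr)^{p/2}. -/
/-!
For `0 < r < R` we have `u r = -∫_r^R u'`, and Cauchy–Schwarz against the weight `t^(N-1)` gives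
`|u r|² ≤ ‖u‖² ∫_r^R t^(1-N) dt ≤ ‖u‖² (R^δ/δ) r^(2-N-δ)` for every `δ > 0`. Hence
`r^(N-1) |u r|^p ≤ C ‖u‖^p r^α` with `α = N - 1 + (2 - N - δ) p/2`, and `α > -1` for small `δ`
exactly when `p (N - 2) < 2N`; then `r^α` is integrable on `(0, R)`.
-/


open MeasureTheory Set Filter
open scoped Classical

noncomputable section

variable {N : ℕ} {R : ℝ}

theorem le_sqrt_mul_of_forall_le_amgm {x S W : ℝ} (hW : 0 < W)
    (h : ∀ a > 0, x ≤ (a * W + a⁻¹ * S) / 2) : x ≤ √(S * W) := by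
  rcases le_or_gt x 0 with hx | hx
  · exact hx.trans (Real.sqrt_nonneg _)
  have hxa := h (x / W) (by positivity)
  rw [div_mul_cancel₀ x hW.ne', inv_div, div_mul_eq_mul_div] at hxa
  have hx2 : x ≤ W * S / x := by linarith
  rw [le_div_iff₀ hx] at hx2
  rw [Real.le_sqrt' hx]
  linarith

theorem abs_le_amgm (x : ℝ) {a c : ℝ} (ha : 0 < a) (hc : 0 < c) :
    |x| ≤ (a * c⁻¹ + a⁻¹ * (c * x ^ 2)) / 2 := by
  have key : 0 ≤ (a - c * |x|) ^ 2 / (a * c) := by positivity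
  have e : (a - c * |x|) ^ 2 / (a * c) = a * c⁻¹ + a⁻¹ * (c * x ^ 2) - 2 * |x| := by
    field_simp
    rw [← sq_abs x]
    ring
  linarith

theorem intervalIntegrable_inv_pow {r R : ℝ} (hr : 0 < r) (hrR : r ≤ R) (n : ℕ) :
    IntervalIntegrable (fun t : ℝ => (t ^ n)⁻¹) volume r R := by
  refine ((continuous_pow n).continuousOn.inv₀ fun t ht => ?_).intervalIntegrable
  rw [uIcc_of_le hrR] at ht
  exact pow_ne_zero _ (hr.trans_le ht.1).ne'

/-- Losing `δ` in the exponent gives a power bound also for `N = 2`, where the integral is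
logarithmic. -/
theorem integral_inv_pow_le {N : ℕ} (hN : 2 ≤ N) {δ r R : ℝ} (hδ : 0 < δ) (hr : 0 < r)
    (hrR : r ≤ R) : ∫ t in r..R, (t ^ (N - 1))⁻¹ ≤ R ^ δ / δ * r ^ (2 - (N : ℝ) - δ) := by
  have hexp : 2 - (N : ℝ) - δ ≤ 0 := by
    have : (2 : ℝ) ≤ N := by exact_mod_cast hN
    linarith
  have hpt : ∀ t ∈ Icc r R, (t ^ (N - 1))⁻¹ ≤ r ^ (2 - (N : ℝ) - δ) * t ^ (δ - 1) := by
    intro t ht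
    have ht0 : 0 < t := hr.trans_le ht.1
    calc (t ^ (N - 1))⁻¹ = t ^ (2 - (N : ℝ) - δ) * t ^ (δ - 1) := by
          rw [← Real.rpow_add ht0, ← Real.rpow_natCast, ← Real.rpow_neg ht0.le,
            Nat.cast_sub (by omega)]
          ring_nf
      _ ≤ r ^ (2 - (N : ℝ) - δ) * t ^ (δ - 1) :=
          mul_le_mul_of_nonneg_right (Real.rpow_le_rpow_of_nonpos hr ht.1 hexp)
            (Real.rpow_nonneg ht0.le _)
  have hint : ∫ t in r..R, t ^ (δ - 1) = (R ^ δ - r ^ δ) / δ := by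
    rw [integral_rpow (Or.inl (by linarith)), sub_add_cancel]
  calc ∫ t in r..R, (t ^ (N - 1))⁻¹ ≤ ∫ t in r..R, r ^ (2 - (N : ℝ) - δ) * t ^ (δ - 1) :=
        intervalIntegral.integral_mono_on hrR (intervalIntegrable_inv_pow hr hrR _)
          ((intervalIntegral.intervalIntegrable_rpow' (by linarith)).const_mul _) hpt
    _ = r ^ (2 - (N : ℝ) - δ) * ((R ^ δ - r ^ δ) / δ) := by
        rw [intervalIntegral.integral_const_mul, hint]
    _ ≤ R ^ δ / δ * r ^ (2 - (N : ℝ) - δ) := by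
        rw [mul_comm]
        gcongr
        linarith [Real.rpow_nonneg hr.le δ]

namespace SpaceA

theorem normSq_nonneg (w : SpaceA N R) : 0 ≤ w.normSq :=
  setIntegral_nonneg measurableSet_Ioo fun t ht => by have := ht.1; positivity

theorem intervalIntegrable_weighted_sq (w : SpaceA N R) {r : ℝ} (hr : 0 ≤ r) (hrR : r ≤ R) :
    IntervalIntegrable (fun t => t ^ (N - 1) * w.d t ^ 2) volume r R :=
  (intervalIntegrable_iff_integrableOn_Ioo_of_le hrR).mpr
    (w.sq_integrable.mono_set (Ioo_subset_Ioo_left hr))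

theorem intervalIntegral_weighted_sq_le (w : SpaceA N R) {r : ℝ} (hr : 0 ≤ r) (hrR : r ≤ R) :
    ∫ t in r..R, t ^ (N - 1) * w.d t ^ 2 ≤ w.normSq := by
  rw [intervalIntegral.integral_of_le hrR, integral_Ioc_eq_integral_Ioo]
  refine setIntegral_mono_set w.sq_integrable ?_ (Ioo_subset_Ioo_left hr).eventuallyLE
  exact (ae_restrict_iff' measurableSet_Ioo).mpr (ae_of_all _ fun t ht => by
    have := ht.1; positivity)

theorem intervalIntegrable_d (w : SpaceA N R) {r : ℝ} (hr : 0 < r) (hrR : r ≤ R) :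
    IntervalIntegrable w.d volume r R := by
  have hmeas : AEStronglyMeasurable w.d (volume.restrict (Ioc r R)) :=
    (measurable_deriv w.u).aestronglyMeasurable.congr <|
      (ae_restrict_iff' measurableSet_Ioc).mpr <| ae_of_all _ fun t ht =>
        (w.hasDeriv t ⟨hr.trans ht.1, ht.2⟩).deriv
  have hdom := ((intervalIntegrable_inv_pow hr hrR (N - 1)).add
    (w.intervalIntegrable_weighted_sq hr.le hrR)).div_const 2
  refine (intervalIntegrable_iff_integrableOn_Ioc_of_le hrR).mpr <|
    Integrable.mono' ((intervalIntegrable_iff_integrableOn_Ioc_of_le hrR).mp hdom) hmeas <|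
      (ae_restrict_iff' measurableSet_Ioc).mpr <| ae_of_all _ fun t ht => ?_
  simpa using abs_le_amgm (w.d t) one_pos (pow_pos (hr.trans ht.1) (N - 1))

theorem u_eq_neg_integral_d (w : SpaceA N R) {r : ℝ} (hr : 0 < r) (hrR : r ≤ R) :
    w.u r = -∫ t in r..R, w.d t := by
  have hderiv : ∀ t ∈ uIcc r R, HasDerivAt w.u (w.d t) t := fun t ht => by
    rw [uIcc_of_le hrR] at ht
    exact w.hasDeriv t ⟨hr.trans_le ht.1, ht.2⟩
  rw [intervalIntegral.integral_eq_sub_of_hasDerivAt hderiv (w.intervalIntegrable_d hr hrR),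
    w.boundary, zero_sub, neg_neg]

/-- Cauchy–Schwarz against the weight `t ^ (N - 1)`, as weighted AM–GM optimised over `a`. -/
theorem abs_u_le_sqrt_normSq_mul (w : SpaceA N R) {r : ℝ} (hr : 0 < r) (hrR : r < R) :
    |w.u r| ≤ √(w.normSq * ∫ t in r..R, (t ^ (N - 1))⁻¹) := by
  have hW : 0 < ∫ t in r..R, (t ^ (N - 1))⁻¹ :=
    intervalIntegral.intervalIntegral_pos_of_pos_on (intervalIntegrable_inv_pow hr hrR.le _)
      (fun t ht => by have := hr.trans ht.1; positivity) hrR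
  refine le_sqrt_mul_of_forall_le_amgm hW fun a ha => ?_
  have hint₁ := intervalIntegrable_inv_pow hr hrR.le (N - 1)
  have hint₂ := w.intervalIntegrable_weighted_sq hr.le hrR.le
  calc |w.u r| = |∫ t in r..R, w.d t| := by rw [w.u_eq_neg_integral_d hr hrR.le, abs_neg]
    _ ≤ ∫ t in r..R, |w.d t| := intervalIntegral.abs_integral_le_integral_abs hrR.le
    _ ≤ ∫ t in r..R, (a * (t ^ (N - 1))⁻¹ + a⁻¹ * (t ^ (N - 1) * w.d t ^ 2)) / 2 :=
        intervalIntegral.integral_mono_on hrR.le (w.intervalIntegrable_d hr hrR.le).abs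
          (((hint₁.const_mul a).add (hint₂.const_mul a⁻¹)).div_const 2)
          fun t ht => abs_le_amgm (w.d t) ha (pow_pos (hr.trans_le ht.1) _)
    _ = ((a * ∫ t in r..R, (t ^ (N - 1))⁻¹) +
          a⁻¹ * ∫ t in r..R, t ^ (N - 1) * w.d t ^ 2) / 2 := by
        rw [intervalIntegral.integral_div, intervalIntegral.integral_add (hint₁.const_mul a)
          (hint₂.const_mul a⁻¹), intervalIntegral.integral_const_mul,
          intervalIntegral.integral_const_mul]
    _ ≤ ((a * ∫ t in r..R, (t ^ (N - 1))⁻¹) + a⁻¹ * w.normSq) / 2 := by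
        gcongr
        exact w.intervalIntegral_weighted_sq_le hr.le hrR.le

theorem pow_mul_abs_u_rpow_le (hN : 2 ≤ N) (w : SpaceA N R) {δ p r : ℝ} (hδ : 0 < δ)
    (hp : 0 ≤ p) (hr : r ∈ Ioo 0 R) :
    r ^ (N - 1) * |w.u r| ^ p ≤
      (w.normSq * (R ^ δ / δ)) ^ (p / 2) * r ^ ((N - 1 : ℝ) + (2 - N - δ) * (p / 2)) := by
  obtain ⟨hr0, hrR⟩ := hr
  have hR0 := hr0.trans hrR
  have hS := w.normSq_nonneg
  have hu : |w.u r| ^ p ≤ (w.normSq * (R ^ δ / δ * r ^ (2 - (N : ℝ) - δ))) ^ (p / 2) := by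
    calc |w.u r| ^ p ≤ √(w.normSq * ∫ t in r..R, (t ^ (N - 1))⁻¹) ^ p := by
          gcongr
          exact w.abs_u_le_sqrt_normSq_mul hr0 hrR
      _ ≤ √(w.normSq * (R ^ δ / δ * r ^ (2 - (N : ℝ) - δ))) ^ p := by
          gcongr
          exact integral_inv_pow_le hN hδ hr0 hrR.le
      _ = _ := by
          rw [Real.sqrt_eq_rpow, ← Real.rpow_mul (by positivity)]
          ring_nf
  calc r ^ (N - 1) * |w.u r| ^ p
      ≤ r ^ (N - 1) * (w.normSq * (R ^ δ / δ * r ^ (2 - (N : ℝ) - δ))) ^ (p / 2) := by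
        gcongr
    _ = _ := by
        rw [← mul_assoc, Real.mul_rpow (by positivity) (by positivity), ← Real.rpow_mul hr0.le,
          ← Real.rpow_natCast, Nat.cast_sub (by omega), Real.rpow_add hr0]
        push_cast
        ring

end SpaceA

theorem setLIntegral_Ioo_ofReal_mul_rpow {R α : ℝ} (hR : 0 < R) (hα : -1 < α) {K : ℝ}
    (hK : 0 ≤ K) :
    ∫⁻ r in Ioo 0 R, ENNReal.ofReal (K * r ^ α) = ENNReal.ofReal (K * (R ^ (α + 1) / (α + 1))) := by
  have hint : IntegrableOn (fun r : ℝ => K * r ^ α) (Ioo 0 R) :=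
    ((intervalIntegrable_iff_integrableOn_Ioo_of_le hR.le).mp
      (intervalIntegral.intervalIntegrable_rpow' hα)).const_mul K
  rw [← ofReal_integral_eq_lintegral_ofReal hint
    ((ae_restrict_iff' measurableSet_Ioo).mpr (ae_of_all _ fun r hr => by
      have := hr.1; positivity)),
    integral_const_mul, ← integral_Ioc_eq_integral_Ioo, ← intervalIntegral.integral_of_le hR.le,
    integral_rpow (Or.inl hα), Real.zero_rpow (by linarith), sub_zero]

theorem exists_pos_rpow_exponent_gt_neg_one {N p : ℝ} (hp : 0 < p) (hNp : p * (N - 2) < 2 * N) :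
    ∃ δ > 0, -1 < (N - 1) + (2 - N - δ) * (p / 2) := by
  refine ⟨(2 * N - p * (N - 2)) / (2 * p), by apply div_pos <;> linarith, ?_⟩
  field_simp
  linarith

/-- Weighted Sobolev/Poincaré inequality: `∫₀^R r^{N-1}|u|^p dr ≤ C(N,p,R)‖u‖^p`. -/
theorem weighted_sobolev_inequality
    (N : ℕ) (R : ℝ) (hR : 0 < R) (p : ℝ)
    (hNp : (3 ≤ N ∧ 1 ≤ p ∧ p < 2 * (N : ℝ) / ((N : ℝ) - 2)) ∨ (N = 2 ∧ 1 ≤ p)) :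
    ∃ C : ℝ, 0 < C ∧ ∀ w : SpaceA N R,
      (∫⁻ r in Set.Ioo (0 : ℝ) R, ENNReal.ofReal (r ^ (N - 1) * |w.u r| ^ p)) ≤
        ENNReal.ofReal (C * w.normSq ^ (p / 2)) := by
  obtain ⟨hN, hp, hsub⟩ : 2 ≤ N ∧ 0 < p ∧ p * ((N : ℝ) - 2) < 2 * N := by
    rcases hNp with ⟨hN, hp, hlt⟩ | ⟨rfl, hp⟩
    · have : (3 : ℝ) ≤ N := by exact_mod_cast hN
      rw [lt_div_iff₀ (by linarith)] at hlt
      exact ⟨by omega, by linarith, hlt⟩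
    · exact ⟨le_rfl, by linarith, by norm_num⟩
  obtain ⟨δ, hδ, hα⟩ := exists_pos_rpow_exponent_gt_neg_one hp hsub
  set α : ℝ := (N - 1) + (2 - N - δ) * (p / 2)
  refine ⟨(R ^ δ / δ) ^ (p / 2) * (R ^ (α + 1) / (α + 1)),
    mul_pos (by positivity) (div_pos (by positivity) (by linarith)), fun w => ?_⟩
  have hS := w.normSq_nonneg
  calc ∫⁻ r in Ioo 0 R, ENNReal.ofReal (r ^ (N - 1) * |w.u r| ^ p)
      ≤ ∫⁻ r in Ioo 0 R, ENNReal.ofReal ((w.normSq * (R ^ δ / δ)) ^ (p / 2) * r ^ α) :=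
        setLIntegral_mono' measurableSet_Ioo fun r hr =>
          ENNReal.ofReal_le_ofReal (w.pow_mul_abs_u_rpow_le hN hδ hp.le hr)
    _ = _ := by
        rw [setLIntegral_Ioo_ofReal_mul_rpow hR hα (by positivity),
          Real.mul_rpow hS (by positivity)]
        ring_nf
end
end

section
/- Let N ≥ 3 be an integer, R > 0, 1 < q < 2, λ > 0; suppose f satisfies (F1)–(F3) and b satisfies (B). If u is a positive weak solution of (BP) (u(r) > 0 on (0,R)), then u'(r) < 0 for every r ∈ (0,R]. If u is a negative weak solution, then u'(r) > 0 for every r ∈ (0,R]. -/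
open MeasureTheory Set Filter
open scoped Classical

noncomputable section

variable {N : ℕ} {R : ℝ}

/-! Testing the weak formulation against `C¹` functions vanishing at `R` shows that the flux
`r^{N-1} u' / √(1 - u'²)` equals `-∫₀^r t^{N-1} (λ b u^{q-1} + f(t,u)) dt` almost everywhere.
For a positive solution, `|u'| ≤ 1` and `u(R) = 0` give `0 < u(r) ≤ R - r`, so (F3) makes this
integrand positive and the flux, hence `u'`, negative; since the right-hand side is continuous,
the a.e. identity determines `u'` at every point of `(0,R]`. Negative solutions reduce to positive
ones through `u ↦ -u`, `f(r,s) ↦ -f(r,-s)`. -/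
open Topology

theorem eq_div_sqrt_one_add_sq_of_div_sqrt_one_sub_sq_eq {d z : ℝ} (hd : |d| ≤ 1) (hz : z ≠ 0)
    (h : d / Real.sqrt (1 - d ^ 2) = z) : d = z / Real.sqrt (1 + z ^ 2) := by
  have hd2 : 0 < 1 - d ^ 2 := by
    rcases (sq_le_one_iff_abs_le_one d).mpr hd |>.lt_or_eq with hlt | heq
    · linarith
    · rw [heq, sub_self, Real.sqrt_zero, div_zero] at h
      exact absurd h.symm hz
  have hs : 0 < Real.sqrt (1 - d ^ 2) := Real.sqrt_pos.mpr hd2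
  have hsqrt : Real.sqrt (1 + z ^ 2) = (Real.sqrt (1 - d ^ 2))⁻¹ := by
    rw [← Real.sqrt_inv, ← h, div_pow, Real.sq_sqrt hd2.le]
    congr 1
    field_simp
    ring
  rw [hsqrt, div_inv_eq_mul, ← h, div_mul_cancel₀ _ hs.ne']

open intervalIntegral in
theorem eqOn_Ioc_of_hasDerivAt_of_ae_eq {a b : ℝ} {u d ρ : ℝ → ℝ}
    (hu : ∀ x ∈ Ioc a b, HasDerivAt u (d x) x) (hρ : ContinuousOn ρ (Ioc a b))
    (hdρ : ∀ᵐ x ∂volume.restrict (Ioc a b), d x = ρ x) : EqOn d ρ (Ioc a b) := by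
  intro x₀ hx₀
  obtain ⟨c, hac, hcx⟩ := exists_between hx₀.1
  have hsub : ∀ x ∈ Icc c x₀, Icc c x ⊆ Ioc a b := fun x hx y hy =>
    ⟨hac.trans_le hy.1, hy.2.trans (hx.2.trans hx₀.2)⟩
  have hρi : ∀ x ∈ Icc c x₀, IntervalIntegrable ρ volume c x := fun x hx =>
    (hρ.mono (by rw [uIcc_of_le hx.1]; exact hsub x hx)).intervalIntegrable
  have hftc : ∀ x ∈ Icc c x₀, u x = u c + ∫ t in c..x, ρ t := by
    intro x hx
    have hae : d =ᵐ[volume.restrict (uIoc c x)] ρ := by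
      rw [uIoc_of_le hx.1]
      exact ae_restrict_of_ae_restrict_of_subset (Ioc_subset_Icc_self.trans (hsub x hx)) hdρ
    rw [← integral_congr_ae_restrict hae, integral_eq_sub_of_hasDerivAt
      (fun y hy => hu y (hsub x hx (by rwa [uIcc_of_le hx.1] at hy)))
      ((hρi x hx).congr_ae hae.symm)]
    ring
  have hnhds : Ioc a b ∈ 𝓝[≤] x₀ :=
    mem_nhdsWithin.mpr ⟨Ioi a, isOpen_Ioi, hx₀.1, fun y hy => ⟨hy.1, hy.2.trans hx₀.2⟩⟩
  have hG : HasDerivWithinAt (fun x => u c + ∫ t in c..x, ρ t) (ρ x₀) (Iic x₀) x₀ :=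
    (integral_hasDerivWithinAt_right (hρi x₀ ⟨hcx.le, le_rfl⟩)
      ((hρ.stronglyMeasurableAtFilter_nhdsWithin measurableSet_Ioc x₀).filter_mono
        (nhdsWithin_le_of_mem hnhds))
      ((hρ x₀ hx₀).mono_of_mem_nhdsWithin hnhds)).const_add _
  have hu' : HasDerivWithinAt u (ρ x₀) (Iic x₀) x₀ :=
    hG.congr_of_eventuallyEq (eventually_of_mem (Icc_mem_nhdsLE hcx) hftc)
      (hftc x₀ ⟨hcx.le, le_rfl⟩)
  exact (uniqueDiffWithinAt_Iic x₀).eq_deriv _ (hu x₀ hx₀).hasDerivWithinAt hu'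

open intervalIntegral in
theorem ae_eq_neg_primitive_of_integral_mul_deriv_eq {a b : ℝ} (hab : a ≤ b) {A B : ℝ → ℝ}
    (hA : IntegrableOn A (Ioo a b)) (hB : IntegrableOn B (Ioo a b))
    (hBc : ContinuousOn B (Ioo a b))
    (h : ∀ (v v' : ℝ → ℝ) (C : ℝ), (∀ x, HasDerivAt v (v' x) x) → Continuous v' →
      (∀ x, |v' x| ≤ C) → v b = 0 → ∫ x in Ioo a b, A x * v' x = ∫ x in Ioo a b, B x * v x) :
    ∀ᵐ x ∂volume.restrict (Ioo a b), A x = -∫ t in a..x, B t := by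
  set P : ℝ → ℝ := fun x => ∫ t in a..x, B t
  have hBi : IntervalIntegrable B volume a b :=
    (intervalIntegrable_iff_integrableOn_Ioo_of_le hab).mpr hB
  have hPc : ContinuousOn P (uIcc a b) :=
    continuousOn_primitive_interval' hBi left_mem_uIcc
  have hPd : ∀ x ∈ Ioo a b, HasDerivAt P (B x) x := fun x hx =>
    integral_hasDerivAt_right (hBi.mono_set (uIcc_subset_uIcc_left
      (by rw [uIcc_of_le hab]; exact Ioo_subset_Icc_self hx)))
      (hBc.stronglyMeasurableAtFilter isOpen_Ioo x hx) (hBc.continuousAt (isOpen_Ioo.mem_nhds hx))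
  have hPi : IntegrableOn P (Ioo a b) := (hPc.integrableOn_compact isCompact_uIcc).mono_set
    (by rw [uIcc_of_le hab]; exact Ioo_subset_Icc_self)
  -- du Bois-Reymond: `A + P` annihilates every test function `g`, as one sees by integrating
  -- `∫ B v` by parts for `v = ∫ₓᵇ g`
  suffices hAP : ∀ᵐ x ∂volume.restrict (Ioo a b), A x + P x = 0 by
    filter_upwards [hAP] with x hx
    linarith
  refine ae_eq_zero_of_integral_contDiff_smul_eq_zero (hA.add hPi).locallyIntegrable
    fun g hg hgs => ?_
  obtain ⟨C, hC⟩ := hgs.exists_bound_of_continuous hg.continuous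
  have hgc : Continuous fun x => -g x := hg.continuous.neg
  have hgb : ∀ x, ‖-g x‖ ≤ C := fun x => by simpa using hC x
  set v : ℝ → ℝ := fun x => -∫ t in b..x, g t
  have hv : ∀ x, HasDerivAt v (-g x) x := fun x =>
    (hg.continuous.integral_hasStrictDerivAt b x).hasDerivAt.neg
  have hweak : ∫ x in Ioo a b, A x * -g x = ∫ x in Ioo a b, B x * v x :=
    h v (fun x => -g x) C hv hgc hgb (by simp [v])
  have hparts : ∫ x in Ioo a b, P x * -g x = -∫ x in Ioo a b, B x * v x := by
    have := integral_mul_deriv_eq_deriv_mul_of_hasDerivAt hPc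
      (fun x _ => (hv x).continuousAt.continuousWithinAt)
      (fun x hx => hPd x (by rwa [min_eq_left hab, max_eq_right hab] at hx))
      (fun x _ => hv x) hBi (hgc.intervalIntegrable a b)
    simpa [P, v, integral_of_le hab, integral_Ioc_eq_integral_Ioo] using this
  calc ∫ x in Ioo a b, g x • (A x + P x)
      = -((∫ x in Ioo a b, A x * -g x) + ∫ x in Ioo a b, P x * -g x) := by
        rw [← integral_add (hA.mul_bdd hgc.aestronglyMeasurable (ae_of_all _ hgb))
          (hPi.mul_bdd hgc.aestronglyMeasurable (ae_of_all _ hgb)), ← MeasureTheory.integral_neg]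
        simp only [smul_eq_mul]
        congr 1 with x
        ring
    _ = 0 := by rw [hweak, hparts]; ring

namespace SpaceA

theorem abs_u_le_of_inK (w : SpaceA N R) (hw : w.inK) {r : ℝ} (hr : r ∈ Ioo 0 R) :
    |w.u r| ≤ R - r := by
  have := norm_image_sub_le_of_norm_deriv_le_segment' (f := w.u) (C := 1)
    (fun x hx => (w.hasDeriv x ⟨hr.1.trans_le hx.1, hx.2⟩).hasDerivWithinAt)
    (fun x hx => hw x ⟨hr.1.trans_le hx.1, hx.2⟩) R ⟨hr.2.le, le_rfl⟩
  simpa [w.boundary] using this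

def flux (w : SpaceA N R) (r : ℝ) : ℝ := r ^ (N - 1) * w.d r / Real.sqrt (1 - w.d r ^ 2)

def reaction (q lam : ℝ) (b : ℝ → ℝ) (f : ℝ → ℝ → ℝ) (w : SpaceA N R) (r : ℝ) : ℝ :=
  r ^ (N - 1) * (lam * b r * |w.u r| ^ (q - 2) * w.u r + f r (w.u r))

def ofHasDerivAt (v v' : ℝ → ℝ) (hv : ∀ x, HasDerivAt v (v' x) x) (hv' : Continuous v')
    (hvR : v R = 0) : SpaceA N R where
  u := v
  d := v'
  hasDeriv x _ := hv x
  sq_integrable := (Continuous.integrableOn_Icc (by fun_prop)).mono_set Ioo_subset_Icc_self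
  boundary := hvR

def neg (w : SpaceA N R) : SpaceA N R where
  u r := -w.u r
  d r := -w.d r
  hasDeriv r hr := (w.hasDeriv r hr).neg
  sq_integrable := by simpa only [neg_sq] using w.sq_integrable
  boundary := by simp [w.boundary]

theorem isPos_neg {w : SpaceA N R} (hw : w.isNeg) : w.neg.isPos :=
  fun r hr => neg_pos.mpr (hw r hr)

end SpaceA

open SpaceA

section WeakSolution

variable {q lam : ℝ} {b : ℝ → ℝ} {f : ℝ → ℝ → ℝ} {u : SpaceA N R}

theorem isWeakSol.integral_flux_mul_eq (hu : isWeakSol q lam b f u) {v v' : ℝ → ℝ} {C : ℝ}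
    (hv : ∀ x, HasDerivAt v (v' x) x) (hv' : Continuous v') (hC : ∀ x, |v' x| ≤ C)
    (hvR : v R = 0) :
    ∫ r in Ioo 0 R, u.flux r * v' r = ∫ r in Ioo 0 R, u.reaction q lam b f r * v r := by
  have hC1 : 0 < C + 1 := by linarith [(abs_nonneg _).trans (hC 0)]
  set c := (C + 1)⁻¹
  have hc : 0 < c := inv_pos.mpr hC1
  have hφ : (ofHasDerivAt (N := N) (R := R) (fun x => c * v x) (fun x => c * v' x)
      (fun x => (hv x).const_mul c) (continuous_const.mul hv') (by simp [hvR])).inK := by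
    intro r _
    change |c * v' r| ≤ 1
    rw [abs_mul, abs_of_pos hc, ← inv_mul_cancel₀ hC1.ne']
    gcongr
    linarith [hC r]
  have h := hu.2 _ hφ
  simp only [ofHasDerivAt] at h
  rw [← mul_right_inj' hc.ne', ← integral_const_mul, ← integral_const_mul]
  convert h using 1 <;> (congr 1 with r; simp only [flux, reaction]; ring)

theorem isWeakSol.neg (hu : isWeakSol q lam b f u) :
    isWeakSol q lam b (fun r s => -f r (-s)) u.neg := by
  refine ⟨fun r hr => by simpa [SpaceA.neg] using hu.1 r hr, fun φ hφ => ?_⟩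
  simp only [SpaceA.neg, neg_sq, abs_neg, neg_neg]
  rw [← neg_inj, ← integral_neg, ← integral_neg]
  convert hu.2 φ hφ using 1 <;> (congr 1 with r; ring)

theorem hypF1.reflect (hF1 : hypF1 R f) : hypF1 R (fun r s => -f r (-s)) :=
  (hF1.comp (continuous_fst.prodMk continuous_snd.neg).continuousOn fun p hp =>
    ⟨hp.1, neg_mem_Icc_iff.mpr (by simpa [and_comm] using hp.2)⟩).neg

theorem hypF3.reflect (hF3 : hypF3 R f) : hypF3 R (fun r s => -f r (-s)) := by
  intro r hr s hs hsR
  have := hF3 r hr (-s) (neg_ne_zero.mpr hs) (by rwa [abs_neg])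
  linarith

theorem continuousOn_radial_nonlinearity (hq : 1 < q) (hF1 : hypF1 R f)
    (hb : ContinuousOn b (Icc 0 R)) :
    ContinuousOn (fun p : ℝ × ℝ => p.1 ^ (N - 1) * (lam * b p.1 * p.2 ^ (q - 1) + f p.1 p.2))
      (Icc 0 R ×ˢ Icc 0 R) := by
  have hsub : Icc 0 R ×ˢ Icc 0 R ⊆ Icc 0 R ×ˢ Icc (-R) R := fun p hp =>
    ⟨hp.1, by linarith [hp.2.1, hp.2.2], hp.2.2⟩
  refine (continuous_fst.pow _).continuousOn.mul
    ((continuousOn_const.mul (hb.comp continuousOn_fst fun p hp => hp.1)).mul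
      (continuousOn_snd.rpow_const fun _ _ => Or.inr (by linarith)) |>.add (hF1.mono hsub))

section PositiveSolution

variable (hK : u.inK) (hpos : u.isPos)
include hK hpos

theorem mem_Icc_prod_Icc_of_isPos {r : ℝ} (hr : r ∈ Ioo 0 R) :
    (r, u.u r) ∈ Icc 0 R ×ˢ Icc 0 R :=
  ⟨⟨hr.1.le, hr.2.le⟩, (hpos r hr).le, by
    linarith [(le_abs_self _).trans (u.abs_u_le_of_inK hK hr), hr.1]⟩

omit hK in
theorem reaction_eq_of_isPos {r : ℝ} (hr : r ∈ Ioo 0 R) :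
    u.reaction q lam b f r = r ^ (N - 1) * (lam * b r * u.u r ^ (q - 1) + f r (u.u r)) := by
  have h0 := hpos r hr
  rw [reaction, abs_of_pos h0, mul_assoc (lam * b r), ← Real.rpow_add_one h0.ne']
  ring_nf

theorem reaction_pos_of_isPos (hlam : 0 < lam) (hF3 : hypF3 R f) (hB : hypB R b) {r : ℝ}
    (hr : r ∈ Ioo 0 R) : 0 < u.reaction q lam b f r := by
  obtain ⟨-, b₀, _, hb₀, hb⟩ := hB
  have hrR : r ∈ Icc 0 R := ⟨hr.1.le, hr.2.le⟩
  have hur := mem_Icc_prod_Icc_of_isPos hK hpos hr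
  have hf : 0 < f r (u.u r) := pos_of_mul_pos_right (hF3 r hrR _ (hpos r hr).ne'
    (abs_le.mpr ⟨by linarith [hur.2.1, hur.2.2], hur.2.2⟩)) (hpos r hr).le
  rw [reaction_eq_of_isPos hpos hr]
  exact mul_pos (pow_pos hr.1 _) (add_pos (mul_pos (mul_pos hlam (hb₀.trans_le (hb r hrR).1))
    (Real.rpow_pos_of_pos (hpos r hr) _)) hf)

theorem continuousOn_reaction_of_isPos (hq : 1 < q) (hF1 : hypF1 R f)
    (hb : ContinuousOn b (Icc 0 R)) : ContinuousOn (u.reaction q lam b f) (Ioo 0 R) := by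
  have hu : ContinuousOn u.u (Ioo 0 R) := fun r hr =>
    (u.hasDeriv r (Ioo_subset_Ioc_self hr)).continuousAt.continuousWithinAt
  exact ((continuousOn_radial_nonlinearity hq hF1 hb).comp (continuousOn_id.prodMk hu)
    fun r hr => mem_Icc_prod_Icc_of_isPos hK hpos hr).congr
    fun r hr => reaction_eq_of_isPos hpos hr

theorem integrableOn_reaction_of_isPos (hq : 1 < q) (hF1 : hypF1 R f)
    (hb : ContinuousOn b (Icc 0 R)) : IntegrableOn (u.reaction q lam b f) (Ioo 0 R) := by
  obtain ⟨M, hM⟩ := (isCompact_Icc.prod isCompact_Icc).exists_bound_of_continuousOn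
    (continuousOn_radial_nonlinearity (N := N) (lam := lam) hq hF1 hb)
  refine IntegrableOn.of_bound measure_Ioo_lt_top
    ((continuousOn_reaction_of_isPos hK hpos hq hF1 hb).aestronglyMeasurable measurableSet_Ioo) M
    (ae_restrict_of_forall_mem measurableSet_Ioo fun r hr => ?_)
  rw [reaction_eq_of_isPos hpos hr]
  exact hM _ (mem_Icc_prod_Icc_of_isPos hK hpos hr)

end PositiveSolution

theorem isWeakSol.integrableOn_flux (hu : isWeakSol q lam b f u) (hR : 0 < R)
    (hBint : IntegrableOn (u.reaction q lam b f) (Ioo 0 R))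
    (hBpos : ∀ r ∈ Ioo 0 R, 0 < u.reaction q lam b f r) : IntegrableOn u.flux (Ioo 0 R) := by
  -- testing against `R - r` gives `∫ flux · (-1) > 0`; a non-integrable function has integral `0`
  have h := hu.integral_flux_mul_eq (v := fun x => R - x) (v' := fun _ => -1) (C := 1)
    (fun x => by simpa using (hasDerivAt_id x).const_sub R) continuous_const (by norm_num)
    (sub_self R)
  have hne : ∫ r in Ioo 0 R, u.flux r * -1 ≠ 0 := by
    rw [h, ← integral_Ioc_eq_integral_Ioo, ← intervalIntegral.integral_of_le hR.le]
    refine (intervalIntegral.intervalIntegral_pos_of_pos_on ?_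
      (fun r hr => mul_pos (hBpos r hr) (sub_pos.mpr hr.2)) hR).ne'
    exact ((intervalIntegrable_iff_integrableOn_Ioo_of_le hR.le).mpr hBint).mul_continuousOn
      (continuous_const.sub continuous_id).continuousOn
  simpa [IntegrableOn] using (Integrable.of_integral_ne_zero hne).neg

theorem isWeakSol.d_neg_of_isPos (hR : 0 < R) (hq : 1 < q) (hlam : 0 < lam)
    (hF1 : hypF1 R f) (hF3 : hypF3 R f) (hB : hypB R b) (hu : isWeakSol q lam b f u)
    (hpos : u.isPos) : ∀ r ∈ Ioc 0 R, u.d r < 0 := by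
  set B := u.reaction q lam b f
  have hBpos : ∀ r ∈ Ioo 0 R, 0 < B r := fun r hr =>
    reaction_pos_of_isPos hu.1 hpos hlam hF3 hB hr
  have hBint : IntegrableOn B (Ioo 0 R) := integrableOn_reaction_of_isPos hu.1 hpos hq hF1 hB.1
  have hBi : ∀ x ∈ Ioc 0 R, IntervalIntegrable B volume 0 x := fun x hx =>
    (intervalIntegrable_iff_integrableOn_Ioo_of_le hx.1.le).mpr
      (hBint.mono_set (Ioo_subset_Ioo_right hx.2))
  have hflux := hu.integrableOn_flux hR hBint hBpos
  set P : ℝ → ℝ := fun x => ∫ t in 0..x, B t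
  set z : ℝ → ℝ := fun x => -P x / x ^ (N - 1)
  have hz : ∀ x ∈ Ioc 0 R, z x < 0 := fun x hx =>
    div_neg_of_neg_of_pos (neg_neg_iff_pos.mpr (intervalIntegral.intervalIntegral_pos_of_pos_on
      (hBi x hx) (fun t ht => hBpos t ⟨ht.1, ht.2.trans_le hx.2⟩) hx.1)) (pow_pos hx.1 _)
  have hzc : ContinuousOn z (Ioc 0 R) := by
    refine ((intervalIntegral.continuousOn_primitive_interval' (hBi R ⟨hR, le_rfl⟩)
      left_mem_uIcc).mono ?_).neg.div (continuousOn_pow _) fun x hx => (pow_pos hx.1 _).ne'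
    rw [uIcc_of_le hR.le]
    exact Ioc_subset_Icc_self
  have hd : EqOn u.d (fun x => z x / Real.sqrt (1 + z x ^ 2)) (Ioc 0 R) := by
    refine eqOn_Ioc_of_hasDerivAt_of_ae_eq u.hasDeriv
      (hzc.div ((hzc.pow 2).const_add 1).sqrt fun x _ => (Real.sqrt_pos.mpr (by positivity)).ne')
      ?_
    rw [← Measure.restrict_congr_set Ioo_ae_eq_Ioc]
    filter_upwards [ae_eq_neg_primitive_of_integral_mul_deriv_eq hR.le hflux hBint
      (continuousOn_reaction_of_isPos hu.1 hpos hq hF1 hB.1) fun _ _ _ => hu.integral_flux_mul_eq,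
      ae_restrict_mem measurableSet_Ioo] with x hx hxI
    refine eq_div_sqrt_one_add_sq_of_div_sqrt_one_sub_sq_eq (hu.1 x hxI)
      (hz x (Ioo_subset_Ioc_self hxI)).ne ?_
    rw [eq_div_iff (pow_pos hxI.1 _).ne', ← hx, flux]
    ring
  exact fun r hr => (hd hr).trans_lt (div_neg_of_neg_of_pos (hz r hr) (by positivity))

end WeakSolution

theorem solution_monotonicity_general
    (N : ℕ) (R : ℝ) (hR : 0 < R) (q lam : ℝ) (hq1 : 1 < q)
    (hlam : 0 < lam) (f : ℝ → ℝ → ℝ) (b : ℝ → ℝ)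
    (hF1 : hypF1 R f) (hF3 : hypF3 R f) (hB : hypB R b)
    (u : SpaceA N R) (hu : isWeakSol q lam b f u) :
    (u.isPos → ∀ r ∈ Set.Ioc (0 : ℝ) R, u.d r < 0) ∧
    (u.isNeg → ∀ r ∈ Set.Ioc (0 : ℝ) R, 0 < u.d r) :=
  ⟨hu.d_neg_of_isPos hR hq1 hlam hF1 hF3 hB, fun hneg r hr =>
    neg_neg_iff_pos.mp (hu.neg.d_neg_of_isPos hR hq1 hlam hF1.reflect hF3.reflect hB
      (isPos_neg hneg) r hr)⟩

/-- Monotonicity of the nontrivial one-signed solutions: a positive solution has `u' < 0`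
on `(0,R]` and a negative solution has `u' > 0` on `(0,R]`. -/
theorem solution_monotonicity
    (N : ℕ) (hN : 3 ≤ N) (R : ℝ) (hR : 0 < R) (q lam : ℝ) (hq1 : 1 < q) (hq2 : q < 2)
    (hlam : 0 < lam) (f : ℝ → ℝ → ℝ) (b : ℝ → ℝ)
    (hF1 : hypF1 R f) (hF2 : hypF2 R f) (hF3 : hypF3 R f) (hB : hypB R b)
    (u : SpaceA N R) (hu : isWeakSol q lam b f u) :
    (u.isPos → ∀ r ∈ Set.Ioc (0 : ℝ) R, u.d r < 0) ∧
    (u.isNeg → ∀ r ∈ Set.Ioc (0 : ℝ) R, 0 < u.d r) :=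
  solution_monotonicity_general N R hR q lam hq1 hlam f b hF1 hF3 hB u hu
end
end

section
/- Let N ≥ 3 be an integer, R > 0, 1 < q < 2, λ > 0; suppose f satisfies (F1)–(F3) and b satisfies (B). If u ∈ 𝒜 is a critical point (in the sense of Szulkin) of the functional I_λ^± = Ψ + F_λ^±, then ∫₀^R r^{N-1}|u'|²/√(1−|u'|²) dr < +∞ and ∫₀^R r^{N-1}|u'|/√(1−|u'|²) dr < +∞; in particular the set E = {r ∈ (0,R) : |u'(r)| = 1} has Lebesgue measure zero. -/
open MeasureTheory Set Filter
open scoped Classical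

noncomputable section

variable {N : ℕ} {R : ℝ}

/-!
Test the variational inequality with `v = t • u`, `0 ≤ t < 1`: since the pairing is homogeneous,
`Ψ(u) - Ψ(t u) ≤ (1 - t) C`. Writing `√a - √b = (a - b) / (√a + √b) ≥ (a - b) / (2√a)` with
`a = 1 - t²u'²`, `b = 1 - u'²` bounds the left side below by
`(1 - t²)/2 ∫ r^{N-1} u'² / √(1 - t²u'²)`, so these integrals stay below `2C` and Fatou's lemma
as `t → 1⁻` bounds `∫ r^{N-1} u'² / √(1 - u'²)`, which is infinite as soon as `|u'| = 1` on a set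
of positive measure. The bound on `|u'| / √(1 - u'²)` follows from `|s| ≤ 2s² + 2√(1 - s²)`.
-/

open Topology ENNReal

theorem sq_mul_div_le_sqrt_sub_sqrt {s t : ℝ} (hs : s ^ 2 ≤ 1) (ht : t ^ 2 < 1) :
    (1 - t ^ 2) * s ^ 2 / (2 * Real.sqrt (1 - t ^ 2 * s ^ 2))
      ≤ Real.sqrt (1 - t ^ 2 * s ^ 2) - Real.sqrt (1 - s ^ 2) := by
  have hts : t ^ 2 * s ^ 2 ≤ s ^ 2 := mul_le_of_le_one_left (sq_nonneg s) ht.le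
  have ha : 0 < 1 - t ^ 2 * s ^ 2 := by nlinarith [sq_nonneg s, sq_nonneg t]
  have hsa : Real.sqrt (1 - t ^ 2 * s ^ 2) ^ 2 = 1 - t ^ 2 * s ^ 2 := Real.sq_sqrt ha.le
  have hsb : Real.sqrt (1 - s ^ 2) ^ 2 = 1 - s ^ 2 := Real.sq_sqrt (by linarith)
  have hba : Real.sqrt (1 - s ^ 2) ≤ Real.sqrt (1 - t ^ 2 * s ^ 2) :=
    Real.sqrt_le_sqrt (by linarith)
  rw [div_le_iff₀ (by positivity)]
  nlinarith [Real.sqrt_nonneg (1 - s ^ 2)]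

theorem abs_div_sqrt_one_sub_sq_le {s : ℝ} (hs : |s| ≤ 1) :
    |s| / Real.sqrt (1 - s ^ 2) ≤ 2 * (s ^ 2 / Real.sqrt (1 - s ^ 2)) + 2 := by
  rcases (Real.sqrt_nonneg (1 - s ^ 2)).eq_or_lt with h0 | hpos
  · simp [← h0]
  have hσ : Real.sqrt (1 - s ^ 2) ^ 2 = 1 - s ^ 2 :=
    Real.sq_sqrt (by nlinarith [sq_abs s, abs_nonneg s])
  rw [div_le_iff₀ hpos, add_mul, mul_assoc, div_mul_cancel₀ _ hpos.ne']
  rcases le_or_gt (1 / 2 : ℝ) |s| with h | h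
  · nlinarith [sq_abs s, mul_nonneg (abs_nonneg s) (show (0 : ℝ) ≤ 2 * |s| - 1 by linarith)]
  · nlinarith [sq_abs s, abs_nonneg s]

theorem lintegral_le_of_tendsto_of_eventually_le {α ι : Type*} [MeasurableSpace α]
    {μ : Measure α} {l : Filter ι} [l.NeBot] [l.IsCountablyGenerated] {F : ι → α → ℝ≥0∞}
    {G : α → ℝ≥0∞} {M : ℝ≥0∞} (hF : ∀ i, AEMeasurable (F i) μ)
    (hlim : ∀ᵐ x ∂μ, Tendsto (fun i => F i x) l (𝓝 (G x)))
    (hM : ∀ᶠ i in l, ∫⁻ x, F i x ∂μ ≤ M) : ∫⁻ x, G x ∂μ ≤ M :=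
  calc ∫⁻ x, G x ∂μ = ∫⁻ x, liminf (fun i => F i x) l ∂μ :=
        lintegral_congr_ae (hlim.mono fun _ hx => hx.liminf_eq.symm)
    _ ≤ liminf (fun i => ∫⁻ x, F i x ∂μ) l := lintegral_liminf_le' hF
    _ ≤ M := liminf_le_of_frequently_le' hM.frequently

theorem integrableOn_Ioo_pow_mul_of_abs_le (n : ℕ) {R C : ℝ} {g : ℝ → ℝ}
    (hg : AEMeasurable g (volume.restrict (Ioo 0 R))) (hC : ∀ r ∈ Ioo 0 R, |g r| ≤ C) :
    IntegrableOn (fun r => r ^ n * g r) (Ioo 0 R) := by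
  refine Integrable.of_bound
    ((measurable_id.pow_const n).aemeasurable.mul hg).aestronglyMeasurable (R ^ n * C) ?_
  filter_upwards [ae_restrict_mem measurableSet_Ioo] with r hr
  rw [Real.norm_eq_abs, abs_mul, abs_of_nonneg (pow_nonneg hr.1.le n)]
  exact mul_le_mul (pow_le_pow_left₀ hr.1.le hr.2.le n) (hC r hr) (abs_nonneg _)
    (pow_nonneg (hr.1.trans hr.2).le n)

namespace SpaceA

instance : SMul ℝ (SpaceA N R) where
  smul t w :=
    { u := fun r => t * w.u r
      d := fun r => t * w.d r
      hasDeriv := fun r hr => (w.hasDeriv r hr).const_mul t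
      sq_integrable := by
        refine (w.sq_integrable.const_mul (t ^ 2)).congr (ae_of_all _ fun r => ?_)
        ring
      boundary := by simp [w.boundary] }

@[simp]
theorem smul_u (t : ℝ) (w : SpaceA N R) (r : ℝ) : (t • w).u r = t * w.u r := rfl

@[simp]
theorem smul_d (t : ℝ) (w : SpaceA N R) (r : ℝ) : (t • w).d r = t * w.d r := rfl

theorem aemeasurable_d (w : SpaceA N R) : AEMeasurable w.d (volume.restrict (Ioo 0 R)) := by
  refine (measurable_deriv w.u).aemeasurable.congr ?_
  filter_upwards [ae_restrict_mem measurableSet_Ioo] with r hr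
  exact (w.hasDeriv r (Ioo_subset_Ioc_self hr)).deriv

theorem inK.smul {w : SpaceA N R} (hw : w.inK) {t : ℝ} (ht : |t| ≤ 1) : (t • w).inK :=
  fun r hr => by
    rw [smul_d, abs_mul]
    exact mul_le_one₀ ht (abs_nonneg _) (hw r hr)

theorem inK.sq_d_le_one {w : SpaceA N R} (hw : w.inK) {r : ℝ} (hr : r ∈ Ioo 0 R) :
    w.d r ^ 2 ≤ 1 := by
  rw [← sq_abs]
  exact pow_le_one₀ (abs_nonneg _) (hw r hr)

theorem integrableOn_psiR_integrand (w : SpaceA N R) :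
    IntegrableOn (fun r => r ^ (N - 1) * (1 - Real.sqrt (1 - w.d r ^ 2))) (Ioo 0 R) := by
  refine integrableOn_Ioo_pow_mul_of_abs_le _
    ((by fun_prop : Measurable fun s : ℝ => 1 - Real.sqrt (1 - s ^ 2)).comp_aemeasurable
      w.aemeasurable_d) (C := 1) fun r hr => ?_
  have h1 : Real.sqrt (1 - w.d r ^ 2) ≤ 1 :=
    Real.sqrt_le_one.mpr (by linarith [sq_nonneg (w.d r)])
  rw [abs_le]
  constructor <;> linarith [Real.sqrt_nonneg (1 - w.d r ^ 2)]

theorem inK.integrableOn_sq_div_sqrt {w : SpaceA N R} (hw : w.inK) {t : ℝ} (ht : t ^ 2 < 1) :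
    IntegrableOn (fun r => r ^ (N - 1) * w.d r ^ 2 / Real.sqrt (1 - t ^ 2 * w.d r ^ 2))
      (Ioo 0 R) := by
  simp_rw [mul_div_assoc]
  refine integrableOn_Ioo_pow_mul_of_abs_le _
    ((by fun_prop : Measurable fun s : ℝ => s ^ 2 / Real.sqrt (1 - t ^ 2 * s ^ 2))
      |>.comp_aemeasurable w.aemeasurable_d) (C := 1 / Real.sqrt (1 - t ^ 2)) fun r hr => ?_
  have hd := hw.sq_d_le_one hr
  rw [abs_of_nonneg (by positivity)]
  exact div_le_div₀ zero_le_one hd (Real.sqrt_pos.2 (by linarith))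
    (Real.sqrt_le_sqrt (by nlinarith [sq_nonneg t]))

theorem inK.psiR_sub_psiR_smul_ge {w : SpaceA N R} (hw : w.inK) {t : ℝ} (ht : t ^ 2 < 1) :
    (1 - t ^ 2) / 2 *
        ∫ r in Ioo 0 R, r ^ (N - 1) * w.d r ^ 2 / Real.sqrt (1 - t ^ 2 * w.d r ^ 2)
      ≤ w.PsiR - (t • w).PsiR := by
  rw [PsiR, PsiR, ← integral_sub w.integrableOn_psiR_integrand
    (t • w).integrableOn_psiR_integrand, ← integral_const_mul]
  refine setIntegral_mono_on ((hw.integrableOn_sq_div_sqrt ht).const_mul _)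
    (w.integrableOn_psiR_integrand.sub (t • w).integrableOn_psiR_integrand) measurableSet_Ioo
    fun r hr => ?_
  have hρ : 0 ≤ r ^ (N - 1) := pow_nonneg hr.1.le _
  calc (1 - t ^ 2) / 2 * (r ^ (N - 1) * w.d r ^ 2 / Real.sqrt (1 - t ^ 2 * w.d r ^ 2))
      = r ^ (N - 1) * ((1 - t ^ 2) * w.d r ^ 2 / (2 * Real.sqrt (1 - t ^ 2 * w.d r ^ 2))) := by
        ring
    _ ≤ r ^ (N - 1) * (Real.sqrt (1 - t ^ 2 * w.d r ^ 2) - Real.sqrt (1 - w.d r ^ 2)) :=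
        mul_le_mul_of_nonneg_left (sq_mul_div_le_sqrt_sub_sqrt (hw.sq_d_le_one hr) ht) hρ
    _ = _ := by simp only [smul_d, mul_pow]; ring

/-- `ℝ≥0∞`-valued, so that it is `∞` where `|t u'| = 1` instead of the junk value `0` of the
real quotient. -/
def lorentzDensity (w : SpaceA N R) (t r : ℝ) : ℝ≥0∞ :=
  ENNReal.ofReal (r ^ (N - 1) * w.d r ^ 2) / ENNReal.ofReal (Real.sqrt (1 - t ^ 2 * w.d r ^ 2))

theorem aemeasurable_lorentzDensity (w : SpaceA N R) (t : ℝ) :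
    AEMeasurable (w.lorentzDensity t) (volume.restrict (Ioo 0 R)) := by
  unfold lorentzDensity
  have hd := w.aemeasurable_d
  fun_prop

theorem tendsto_lorentzDensity (w : SpaceA N R) (r : ℝ) :
    Tendsto (fun t => w.lorentzDensity t r) (𝓝 1) (𝓝 (w.lorentzDensity 1 r)) := by
  refine ENNReal.Tendsto.const_div ?_ (Or.inl ENNReal.ofReal_ne_top)
  exact (ENNReal.continuous_ofReal.comp
    (by fun_prop : Continuous fun t : ℝ => Real.sqrt (1 - t ^ 2 * w.d r ^ 2))).tendsto 1

theorem lorentzDensity_eq_ofReal (w : SpaceA N R) {t r : ℝ} (h : t ^ 2 * w.d r ^ 2 < 1) :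
    w.lorentzDensity t r
      = ENNReal.ofReal (r ^ (N - 1) * w.d r ^ 2 / Real.sqrt (1 - t ^ 2 * w.d r ^ 2)) :=
  (ENNReal.ofReal_div_of_pos (Real.sqrt_pos.2 (by linarith))).symm

theorem integrableOn_sq_div_sqrt_of_lintegral_ne_top (w : SpaceA N R)
    (h : ∫⁻ r in Ioo 0 R, w.lorentzDensity 1 r ≠ ∞) :
    IntegrableOn (fun r => r ^ (N - 1) * w.d r ^ 2 / Real.sqrt (1 - w.d r ^ 2)) (Ioo 0 R) := by
  have hd := w.aemeasurable_d
  refine ⟨(by fun_prop : AEMeasurable _ _).aestronglyMeasurable,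
    (hasFiniteIntegral_iff_ofReal ?_).2 (lt_of_le_of_lt ?_ h.lt_top)⟩
  · filter_upwards [ae_restrict_mem measurableSet_Ioo] with r hr
    exact div_nonneg (mul_nonneg (pow_nonneg hr.1.le _) (sq_nonneg _)) (Real.sqrt_nonneg _)
  · refine lintegral_mono fun r => ?_
    simpa only [lorentzDensity, one_pow, one_mul] using ENNReal.ofReal_div_le (Real.sqrt_nonneg _)

theorem inK.integrableOn_abs_div_sqrt {w : SpaceA N R} (hw : w.inK)
    (h : IntegrableOn (fun r => r ^ (N - 1) * w.d r ^ 2 / Real.sqrt (1 - w.d r ^ 2)) (Ioo 0 R)) :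
    IntegrableOn (fun r => r ^ (N - 1) * |w.d r| / Real.sqrt (1 - w.d r ^ 2)) (Ioo 0 R) := by
  have hd := w.aemeasurable_d
  refine ((h.const_mul 2).add (integrable_const (2 * R ^ (N - 1)))).mono'
    (by fun_prop : AEMeasurable _ _).aestronglyMeasurable ?_
  filter_upwards [ae_restrict_mem measurableSet_Ioo] with r hr
  have hρ : 0 ≤ r ^ (N - 1) := pow_nonneg hr.1.le _
  have hρR : r ^ (N - 1) ≤ R ^ (N - 1) := pow_le_pow_left₀ hr.1.le hr.2.le _
  simp only [Pi.add_apply]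
  rw [Real.norm_eq_abs, abs_of_nonneg (by positivity), mul_div_assoc, mul_div_assoc]
  nlinarith [mul_le_mul_of_nonneg_left (abs_div_sqrt_one_sub_sq_le (hw r hr)) hρ]

theorem volume_abs_d_eq_one_of_lintegral_ne_top (w : SpaceA N R)
    (h : ∫⁻ r in Ioo 0 R, w.lorentzDensity 1 r ≠ ∞) :
    volume {r | r ∈ Ioo 0 R ∧ |w.d r| = 1} = 0 := by
  have hfin := ae_lt_top' (w.aemeasurable_lorentzDensity 1) h
  rw [ae_restrict_iff' measurableSet_Ioo, ae_iff] at hfin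
  refine measure_mono_null (fun r ⟨hr, hd⟩ => ?_) hfin
  have hd2 : w.d r ^ 2 = 1 := by rw [← sq_abs, hd, one_pow]
  have htop : w.lorentzDensity 1 r = ∞ := by
    rw [lorentzDensity, hd2, one_pow, one_mul, mul_one, sub_self, Real.sqrt_zero,
      ENNReal.ofReal_zero, ENNReal.div_zero (ENNReal.ofReal_pos.2 (pow_pos hr.1 _)).ne']
  exact fun hlt => (hlt hr).ne htop

/-- `L z` stands for the pairing `⟨F'(w), z⟩` of the smooth part `F` of the functional. -/
def IsSzulkinCritical (L : (ℝ → ℝ) → ℝ) (w : SpaceA N R) : Prop :=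
  w.inK ∧ ∀ v : SpaceA N R, v.inK → 0 ≤ L (fun r => v.u r - w.u r) + v.PsiR - w.PsiR

section IsSzulkinCritical

variable {L : (ℝ → ℝ) → ℝ} {w : SpaceA N R}

theorem IsSzulkinCritical.psiR_sub_psiR_smul_le (hw : w.IsSzulkinCritical L)
    (hL : ∀ c z, L (fun r => c * z r) = c * L z) {t : ℝ} (ht : |t| ≤ 1) :
    w.PsiR - (t • w).PsiR ≤ (1 - t) * -L w.u := by
  have h := hw.2 (t • w) (hw.1.smul ht)
  have hz : (fun r => (t • w).u r - w.u r) = fun r => (t - 1) * w.u r := by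
    funext r
    rw [smul_u]
    ring
  rw [hz, hL] at h
  linarith

theorem IsSzulkinCritical.integral_sq_div_sqrt_le (hw : w.IsSzulkinCritical L)
    (hL : ∀ c z, L (fun r => c * z r) = c * L z) {t : ℝ} (ht0 : 0 ≤ t) (ht1 : t < 1) :
    ∫ r in Ioo 0 R, r ^ (N - 1) * w.d r ^ 2 / Real.sqrt (1 - t ^ 2 * w.d r ^ 2) ≤ 2 * -L w.u := by
  set I := ∫ r in Ioo 0 R, r ^ (N - 1) * w.d r ^ 2 / Real.sqrt (1 - t ^ 2 * w.d r ^ 2)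
  have hI : 0 ≤ I := setIntegral_nonneg measurableSet_Ioo fun r hr =>
    div_nonneg (mul_nonneg (pow_nonneg hr.1.le _) (sq_nonneg _)) (Real.sqrt_nonneg _)
  have h := (hw.1.psiR_sub_psiR_smul_ge (by nlinarith)).trans
    (hw.psiR_sub_psiR_smul_le hL (abs_le.2 ⟨by linarith, ht1.le⟩))
  have h' : (1 + t) / 2 * I ≤ -L w.u :=
    le_of_mul_le_mul_left (by linarith) (by linarith : 0 < 1 - t)
  nlinarith

theorem IsSzulkinCritical.lintegral_lorentzDensity_le (hw : w.IsSzulkinCritical L)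
    (hL : ∀ c z, L (fun r => c * z r) = c * L z) :
    ∫⁻ r in Ioo 0 R, w.lorentzDensity 1 r ≤ ENNReal.ofReal (2 * -L w.u) := by
  refine lintegral_le_of_tendsto_of_eventually_le (l := 𝓝[<] 1) w.aemeasurable_lorentzDensity
    (ae_of_all _ fun r => (w.tendsto_lorentzDensity r).mono_left nhdsWithin_le_nhds) ?_
  filter_upwards [Ioo_mem_nhdsLT (zero_lt_one' ℝ)] with t ht
  have ht2 : t ^ 2 < 1 := by nlinarith [ht.1, ht.2]
  calc ∫⁻ r in Ioo 0 R, w.lorentzDensity t r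
      = ∫⁻ r in Ioo 0 R,
          ENNReal.ofReal (r ^ (N - 1) * w.d r ^ 2 / Real.sqrt (1 - t ^ 2 * w.d r ^ 2)) :=
        setLIntegral_congr_fun measurableSet_Ioo fun r hr => w.lorentzDensity_eq_ofReal
          (by nlinarith [hw.1.sq_d_le_one hr, sq_nonneg (w.d r), sq_nonneg t])
    _ = ENNReal.ofReal
          (∫ r in Ioo 0 R, r ^ (N - 1) * w.d r ^ 2 / Real.sqrt (1 - t ^ 2 * w.d r ^ 2)) := by
        refine (ofReal_integral_eq_lintegral_ofReal (hw.1.integrableOn_sq_div_sqrt ht2) ?_).symm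
        filter_upwards [ae_restrict_mem measurableSet_Ioo] with r hr
        exact div_nonneg (mul_nonneg (pow_nonneg hr.1.le _) (sq_nonneg _)) (Real.sqrt_nonneg _)
    _ ≤ ENNReal.ofReal (2 * -L w.u) :=
        ENNReal.ofReal_le_ofReal (hw.integral_sq_div_sqrt_le hL ht.1.le ht.2)

end IsSzulkinCritical

end SpaceA

theorem FDplus_const_mul (q lam : ℝ) (b : ℝ → ℝ) (f : ℝ → ℝ → ℝ) (w : SpaceA N R) (c : ℝ)
    (z : ℝ → ℝ) : FDplus q lam b f w (fun r => c * z r) = c * FDplus q lam b f w z := by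
  simp_rw [FDplus, mul_left_comm _ c (z _), integral_const_mul]
  ring

theorem FDminus_const_mul (q lam : ℝ) (b : ℝ → ℝ) (f : ℝ → ℝ → ℝ) (w : SpaceA N R) (c : ℝ)
    (z : ℝ → ℝ) : FDminus q lam b f w (fun r => c * z r) = c * FDminus q lam b f w z := by
  simp_rw [FDminus, mul_left_comm _ c (z _), integral_const_mul]
  ring

theorem critical_point_integrability_general
    (N : ℕ) (R : ℝ) (q lam : ℝ) (f : ℝ → ℝ → ℝ) (b : ℝ → ℝ)
    (u : SpaceA N R) (hu : isCritPlus q lam b f u ∨ isCritMinus q lam b f u) :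
    MeasureTheory.IntegrableOn
      (fun r : ℝ => r ^ (N - 1) * u.d r ^ 2 / Real.sqrt (1 - u.d r ^ 2)) (Set.Ioo 0 R) ∧
    MeasureTheory.IntegrableOn
      (fun r : ℝ => r ^ (N - 1) * |u.d r| / Real.sqrt (1 - u.d r ^ 2)) (Set.Ioo 0 R) ∧
    volume {r : ℝ | r ∈ Set.Ioo (0 : ℝ) R ∧ |u.d r| = 1} = 0 := by
  obtain ⟨L, hL, hcrit⟩ : ∃ L : (ℝ → ℝ) → ℝ,
      (∀ c z, L (fun r => c * z r) = c * L z) ∧ u.IsSzulkinCritical L :=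
    hu.elim (fun h => ⟨_, FDplus_const_mul q lam b f u, h⟩)
      (fun h => ⟨_, FDminus_const_mul q lam b f u, h⟩)
  have hfin : ∫⁻ r in Ioo 0 R, u.lorentzDensity 1 r ≠ ∞ :=
    ((hcrit.lintegral_lorentzDensity_le hL).trans_lt ofReal_lt_top).ne
  have hint := u.integrableOn_sq_div_sqrt_of_lintegral_ne_top hfin
  exact ⟨hint, hcrit.1.integrableOn_abs_div_sqrt hint,
    u.volume_abs_d_eq_one_of_lintegral_ne_top hfin⟩

/-- Finiteness of the weighted integrals at Szulkin critical points of `I_λ^±`; in particular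
the set where `|u'| = 1` is Lebesgue-null. -/
theorem critical_point_integrability
    (N : ℕ) (hN : 3 ≤ N) (R : ℝ) (hR : 0 < R) (q lam : ℝ) (hq1 : 1 < q) (hq2 : q < 2)
    (hlam : 0 < lam) (f : ℝ → ℝ → ℝ) (b : ℝ → ℝ)
    (hF1 : hypF1 R f) (hF2 : hypF2 R f) (hF3 : hypF3 R f) (hB : hypB R b)
    (u : SpaceA N R) (hu : isCritPlus q lam b f u ∨ isCritMinus q lam b f u) :
    MeasureTheory.IntegrableOn
      (fun r : ℝ => r ^ (N - 1) * u.d r ^ 2 / Real.sqrt (1 - u.d r ^ 2)) (Set.Ioo 0 R) ∧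
    MeasureTheory.IntegrableOn
      (fun r : ℝ => r ^ (N - 1) * |u.d r| / Real.sqrt (1 - u.d r ^ 2)) (Set.Ioo 0 R) ∧
    volume {r : ℝ | r ∈ Set.Ioo (0 : ℝ) R ∧ |u.d r| = 1} = 0 :=
  critical_point_integrability_general N R q lam f b u hu
end
end
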